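/- Let N ≥ β ≥ 1 be integers and define Pr(M = m) = β · (N-β)! · (m-1)! / (N! · (m-β)!) for m ∈ {β, ..., N}. Then the expectation E[M] = ∑_{m=β}^{N} m · Pr(M = m) equals (β/(β+1)) · (N+1). -/

import Mathlib

/-- The expectation `E[M] = ∑_{m=β}^{N} m · Pr(M = m)` with
`Pr(M = m) = β·(N-β)!·(m-1)!/(N!·(m-β)!)` equals `(β/(β+1))·(N+1)`. -/
theorem stmt4 (N β : ℕ) (hβ : 1 ≤ β) (hβN : β ≤ N) :
    ∑ m ∈ Finset.Icc β N,
      (m : ℚ) * (((β : ℚ) * ((N - β).factorial : ℚ) * ((m - 1).factorial : ℚ)) /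
        ((N.factorial : ℚ) * ((m - β).factorial : ℚ)))
    = ((β : ℚ) / ((β : ℚ) + 1)) * ((N : ℚ) + 1) := by
  induction N, hβN using Nat.le_induction with
  | base =>
    rw [Finset.Icc_self, Finset.sum_singleton]
    obtain ⟨k, rfl⟩ : ∃ k, β = k + 1 := ⟨β - 1, (Nat.succ_pred_eq_of_pos hβ).symm⟩
    simp only [Nat.sub_self, Nat.factorial_zero, Nat.add_sub_cancel, Nat.factorial_succ]
    have h1 : ((k + 1 : ℕ) : ℚ) ≠ 0 := by positivity
    have h2 : ((k.factorial : ℕ) : ℚ) ≠ 0 := Nat.cast_ne_zero.mpr k.factorial_ne_zero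
    push_cast
    field_simp
  | succ N hN ih =>
    rw [Finset.sum_Icc_succ_top (le_trans hN (Nat.le_succ N))]
    have hcast : ((N + 1 - β : ℕ) : ℚ) = (N : ℚ) + 1 - (β : ℚ) := by
      push_cast [Nat.cast_sub (le_trans hN (Nat.le_succ N))]; ring
    have hNne : ((N : ℚ) + 1) ≠ 0 := by positivity
    have hfacN : ((N.factorial : ℕ) : ℚ) ≠ 0 := Nat.cast_ne_zero.mpr N.factorial_ne_zero
    have hfac : (((N + 1).factorial : ℕ) : ℚ) = ((N : ℚ) + 1) * (N.factorial : ℚ) := by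
      rw [Nat.factorial_succ]; push_cast; ring
    have hsub : N + 1 - β = (N - β) + 1 := by omega
    have hfac2 : (((N + 1 - β).factorial : ℕ) : ℚ)
        = ((N : ℚ) + 1 - (β : ℚ)) * ((N - β).factorial : ℚ) := by
      rw [hsub, Nat.factorial_succ, ← hsub]
      push_cast [hcast]
      ring
    have hsum : ∑ m ∈ Finset.Icc β N,
        (m : ℚ) * (((β : ℚ) * ((N + 1 - β).factorial : ℚ) * ((m - 1).factorial : ℚ)) /
          (((N + 1).factorial : ℚ) * ((m - β).factorial : ℚ)))
        = (((N : ℚ) + 1 - (β : ℚ)) / ((N : ℚ) + 1)) *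
          ∑ m ∈ Finset.Icc β N,
            (m : ℚ) * (((β : ℚ) * ((N - β).factorial : ℚ) * ((m - 1).factorial : ℚ)) /
              ((N.factorial : ℚ) * ((m - β).factorial : ℚ))) := by
      rw [Finset.mul_sum]
      refine Finset.sum_congr rfl fun m hm => ?_
      have hfacm : (((m - β).factorial : ℕ) : ℚ) ≠ 0 :=
        Nat.cast_ne_zero.mpr (m - β).factorial_ne_zero
      rw [hfac, hfac2]
      field_simp
    rw [hsum, ih]
    -- simplify the last term
    have hlast : ((N + 1 : ℕ) : ℚ) * (((β : ℚ) * ((N + 1 - β).factorial : ℚ) *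
          (((N + 1 - 1).factorial : ℕ) : ℚ)) /
        (((N + 1).factorial : ℚ) * (((N + 1 - β).factorial : ℕ) : ℚ)))
        = (β : ℚ) := by
      have hfacs : (((N + 1 - β).factorial : ℕ) : ℚ) ≠ 0 :=
        Nat.cast_ne_zero.mpr (N + 1 - β).factorial_ne_zero
      simp only [Nat.add_sub_cancel]
      rw [hfac]
      push_cast
      field_simp
    rw [hlast]
    have hβne : ((β : ℚ) + 1) ≠ 0 := by positivity
    push_cast
    field_simp
    ring
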